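/- arXiv:1901.09251 — 3 statements merged into one kernel-verified Lean document; each statement's English description precedes it below -/
import Mathlib

section
/- On a lightlike hypersurface of a statistical manifold, the induced connections D and D* satisfy (D_X g)(Y,Z) + (D*_X g)(Y,Z) = B(X,Y)η(Z) + B(X,Z)η(Y) + B*(X,Y)η(Z) + B*(X,Z)η(Y) for all tangent vector fields X, Y, Z, where η(X) = g~(X, N). -/
/-- On a lightlike hypersurface of a statistical manifold, the induced
connections `D`, `Ds` satisfy
`(D_X g)(Y,Z) + (Ds_X g)(Y,Z) = B(X,Y)η(Z) + B(X,Z)η(Y) + Bs(X,Y)η(Z) + Bs(X,Z)η(Y)`,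
where `η(X) = g~(X,N)`, `g` is the induced metric `g~(ι·, ι·)` and
`(D_X g)(Y,Z) = X g(Y,Z) - g(D_X Y, Z) - g(Y, D_X Z)`. -/
theorem lightlike_hypersurface_sum_of_Dg
    {F W T : Type*} [CommRing F] [AddCommGroup W] [Module F W]
    [AddCommGroup T] [Module F T]
    (gt : W →ₗ[F] W →ₗ[F] F)
    (ι : T →ₗ[F] W) (ξ : T) (N : W)
    (act : W → F → F)
    (Dt Dts : W → W → W) (D Ds : T → T → T) (B Bs : T → T → F)
    (hsym : ∀ X Y : W, gt X Y = gt Y X)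
    (hNN : gt N N = 0)
    (hξN : gt (ι ξ) N = 1)
    (hdual : ∀ X Y Z : W, act Z (gt X Y) = gt (Dt Z X) Y + gt X (Dts Z Y))
    (hG : ∀ X Y : T, Dt (ι X) (ι Y) = ι (D X Y) + B X Y • N)
    (hGs : ∀ X Y : T, Dts (ι X) (ι Y) = ι (Ds X Y) + Bs X Y • N) :
    ∀ X Y Z : T,
      (act (ι X) (gt (ι Y) (ι Z)) - gt (ι (D X Y)) (ι Z) - gt (ι Y) (ι (D X Z)))
      + (act (ι X) (gt (ι Y) (ι Z)) - gt (ι (Ds X Y)) (ι Z) - gt (ι Y) (ι (Ds X Z)))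
      = B X Y * gt (ι Z) N + B X Z * gt (ι Y) N
        + Bs X Y * gt (ι Z) N + Bs X Z * gt (ι Y) N := by
  intro X Y Z
  have h1 : act (ι X) (gt (ι Y) (ι Z)) = gt (Dt (ι X) (ι Y)) (ι Z) + gt (ι Y) (Dts (ι X) (ι Z)) :=
    hdual _ _ _
  have h2 : act (ι X) (gt (ι Y) (ι Z)) = gt (Dt (ι X) (ι Z)) (ι Y) + gt (ι Z) (Dts (ι X) (ι Y)) := by
    rw [hsym (ι Y) (ι Z)]; exact hdual _ _ _
  calc (act (ι X) (gt (ι Y) (ι Z)) - gt (ι (D X Y)) (ι Z) - gt (ι Y) (ι (D X Z)))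
      + (act (ι X) (gt (ι Y) (ι Z)) - gt (ι (Ds X Y)) (ι Z) - gt (ι Y) (ι (Ds X Z)))
      = (gt (Dt (ι X) (ι Y)) (ι Z) + gt (ι Y) (Dts (ι X) (ι Z))
          - gt (ι (D X Y)) (ι Z) - gt (ι Y) (ι (D X Z)))
        + (gt (Dt (ι X) (ι Z)) (ι Y) + gt (ι Z) (Dts (ι X) (ι Y))
          - gt (ι (Ds X Y)) (ι Z) - gt (ι Y) (ι (Ds X Z))) := by
        rw [← h1, ← h2]
    _ = B X Y * gt (ι Z) N + B X Z * gt (ι Y) N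
        + Bs X Y * gt (ι Z) N + Bs X Z * gt (ι Y) N := by
        rw [hG, hG, hGs, hGs]
        simp only [map_add, map_smul, LinearMap.add_apply, LinearMap.smul_apply,
          smul_eq_mul]
        rw [hsym (ι Y) N, hsym (ι Z) (ι (Ds X Y)), hsym (ι Z) N, hsym (ι (D X Z)) (ι Y),
          hsym N (ι Y)]
        ring
end

section
/- On a lightlike hypersurface of a statistical manifold, the screen distribution equipped with the induced connections ∇ and ∇* forms a statistical structure: ∇ and ∇* are mutually dual with respect to g restricted to S(TM), and both are torsion-free. -/
/-- On a lightlike hypersurface of a statistical manifold, the screen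
distribution `S(TM)` (modelled by `S` with inclusion `ιS` into the tangent fields `T`)
equipped with the induced connections `nab = ∇` and `nabs = ∇*`, defined by
`D_X (PY) = ∇_X PY + C(X,PY) ξ` and `Ds_X (PY) = ∇*_X PY + C*(X,PY) ξ`, forms a
statistical structure: `∇` and `∇*` are mutually dual with respect to the restriction
of `g` to the screen and both are torsion-free. -/
theorem screen_distribution_statistical_structure
    {F W T S : Type*} [CommRing F] [AddCommGroup W] [Module F W]
    [AddCommGroup T] [Module F T] [AddCommGroup S] [Module F S]
    (gt : W →ₗ[F] W →ₗ[F] F)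
    (ι : T →ₗ[F] W) (ιS : S →ₗ[F] T) (ξ : T) (N : W)
    (act : W → F → F)
    (Dt Dts : W → W → W) (D Ds : T → T → T)
    (B Bs : T → T → F)
    (nab nabs : T → S → S) (C Cs : T → S → F)
    (brT : T → T → T) (brS : S → S → S)
    (hsym : ∀ X Y : W, gt X Y = gt Y X)
    (hrad : ∀ X : T, gt (ι ξ) (ι X) = 0)
    (hξN : gt (ι ξ) N = 1)
    (hscrN : ∀ X : S, gt (ι (ιS X)) N = 0)
    (hdual : ∀ X Y Z : W, act Z (gt X Y) = gt (Dt Z X) Y + gt X (Dts Z Y))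
    (hG : ∀ X Y : T, Dt (ι X) (ι Y) = ι (D X Y) + B X Y • N)
    (hGs : ∀ X Y : T, Dts (ι X) (ι Y) = ι (Ds X Y) + Bs X Y • N)
    (hscr : ∀ (X : T) (Y : S), D X (ιS Y) = ιS (nab X Y) + C X Y • ξ)
    (hscrs : ∀ (X : T) (Y : S), Ds X (ιS Y) = ιS (nabs X Y) + Cs X Y • ξ)
    (htfD : ∀ X Y : T, D X Y - D Y X = brT X Y)
    (htfDs : ∀ X Y : T, Ds X Y - Ds Y X = brT X Y)
    (hbrS : ∀ X Y : S, ιS (brS X Y) = brT (ιS X) (ιS Y))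
    (hindep : ∀ (X : S) (f : F), ιS X + f • ξ = 0 → X = 0 ∧ f = 0) :
    (∀ X Y Z : S,
      act (ι (ιS X)) (gt (ι (ιS Y)) (ι (ιS Z)))
        = gt (ι (ιS (nab (ιS X) Y))) (ι (ιS Z))
          + gt (ι (ιS Y)) (ι (ιS (nabs (ιS X) Z)))) ∧
    (∀ X Y : S, nab (ιS X) Y - nab (ιS Y) X = brS X Y) ∧
    (∀ X Y : S, nabs (ιS X) Y - nabs (ιS Y) X = brS X Y) := by
  refine ⟨?_, ?_, ?_⟩
  · intro X Y Z
    have h := hdual (ι (ιS Y)) (ι (ιS Z)) (ι (ιS X))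
    rw [hG, hGs, hscr, hscrs] at h
    have hNZ : gt N (ι (ιS Z)) = 0 := by rw [hsym]; exact hscrN Z
    have hYN : gt (ι (ιS Y)) N = 0 := hscrN Y
    have hξZ : gt (ι ξ) (ι (ιS Z)) = 0 := hrad _
    have hYξ : gt (ι (ιS Y)) (ι ξ) = 0 := by rw [hsym]; exact hrad _
    simp only [map_add, map_smul, LinearMap.add_apply, LinearMap.smul_apply,
      smul_eq_mul, hNZ, hYN, hξZ, hYξ, mul_zero, add_zero] at h
    exact h
  · intro X Y
    have h := htfD (ιS X) (ιS Y)
    rw [hscr, hscr, ← hbrS] at h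
    have h2 : ιS (nab (ιS X) Y - nab (ιS Y) X - brS X Y)
        + (C (ιS X) Y - C (ιS Y) X) • ξ = 0 := by
      simp only [map_sub, sub_smul]
      rw [← h]; abel
    have := (hindep _ _ h2).1
    rwa [sub_eq_zero] at this
  · intro X Y
    have h := htfDs (ιS X) (ιS Y)
    rw [hscrs, hscrs, ← hbrS] at h
    have h2 : ιS (nabs (ιS X) Y - nabs (ιS Y) X - brS X Y)
        + (Cs (ιS X) Y - Cs (ιS Y) X) • ξ = 0 := by
      simp only [map_sub, sub_smul]
      rw [← h]; abel
    have := (hindep _ _ h2).1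
    rwa [sub_eq_zero] at this
end

section
/- If a lightlike hypersurface M of a statistical manifold is totally normally umbilical with respect to both dual connections (A*_N = k·Id and A_N = k*·Id for smooth functions k, k*), then k + k* = 0 and consequently C(X, PY) + C*(X, PY) = 0 for all tangent X, Y. -/
/-- If a lightlike hypersurface `M` of a statistical manifold is totally
normally umbilical with respect to both dual connections (`AsN X = k • X` and
`AN X = ks • X` for smooth functions `k`, `ks`), then `k + ks = 0` and consequently
`C(X,PY) + Cs(X,PY) = 0` for all tangent `X` and screen `PY`.  Context:
`g~(AN X + AsN X, N) = 0`, `C(X,PY) = g(AN X, PY)`, `Cs(X,PY) = g(AsN X, PY)`,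
and `η(ξ) = g~(ξ,N) = 1`. -/
theorem normally_umbilical_implies_C_plus_Cs_zero
    {F W T S : Type*} [CommRing F] [AddCommGroup W] [Module F W]
    [AddCommGroup T] [Module F T] [AddCommGroup S] [Module F S]
    (gt : W →ₗ[F] W →ₗ[F] F)
    (ι : T →ₗ[F] W) (ιS : S →ₗ[F] T) (ξ : T) (N : W)
    (AN AsN : T → T) (C Cs : T → S → F) (k ks : F)
    (hξN : gt (ι ξ) N = 1)
    (hANsum : ∀ X : T, gt (ι (AN X) + ι (AsN X)) N = 0)
    (hC : ∀ (X : T) (Y : S), C X Y = gt (ι (AN X)) (ι (ιS Y)))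
    (hCs : ∀ (X : T) (Y : S), Cs X Y = gt (ι (AsN X)) (ι (ιS Y)))
    (humb : ∀ X : T, AsN X = k • X)
    (humbs : ∀ X : T, AN X = ks • X) :
    k + ks = 0 ∧ ∀ (X : T) (Y : S), C X Y + Cs X Y = 0 := by
  have hsum : k + ks = 0 := by
    have h := hANsum ξ
    rw [humb, humbs] at h
    simp [map_smul, hξN] at h
    linear_combination h
  refine ⟨hsum, fun X Y => ?_⟩
  rw [hC, hCs, humb, humbs]
  simp [map_smul]
  ring_nf
  linear_combination gt (ι X) (ι (ιS Y)) * hsum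
end
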